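/- arXiv:1410.6046 — 3 statements merged into one kernel-verified Lean document; each statement's English description precedes it below -/
import Mathlib

section
/- In the quasi-consecutive pattern poset, suppose σ occurs precisely once in τ = a_1 a_2 ⋯ a_n, the occurrence involves a_n but not a_1 and a_2. Then μ(σ, τ) = 0 unless [σ, τ] has rank 2 and a_1, a_2 are not consecutive integers, in which case μ(σ, τ) = 1. -/
open scoped Classical

/-- A finite permutation of arbitrary length: a length `n` together with a
permutation of `Fin n` (in one-line notation, the entry at position `i` is
its value at `i`). -/
abbrev QPerm : Type := Σ n : ℕ, Equiv.Perm (Fin n)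

/-- `IsOcc a σ τ f` : the strictly monotone position map `f` selects an
occurrence of the pattern `σ` in `τ` (order-isomorphically), where for every
gap index `j ≥ 1` (1-indexed) with `a j = false` the `j`-th and `(j+1)`-th
selected positions must be adjacent in `τ`. -/
def IsOcc (a : ℕ → Bool) {k n : ℕ} (σ : Equiv.Perm (Fin k)) (τ : Equiv.Perm (Fin n))
    (f : Fin k → Fin n) : Prop :=
  StrictMono f ∧ (∀ i j : Fin k, σ i < σ j ↔ τ (f i) < τ (f j)) ∧
    ∀ (i : ℕ) (h : i + 1 < k), a (i + 1) = false →
      (f ⟨i + 1, h⟩ : ℕ) = (f ⟨i, Nat.lt_of_succ_lt h⟩ : ℕ) + 1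

/-- `σ` occurs in `τ` as an `a`-vincular pattern. -/
def VOcc (a : ℕ → Bool) (σ τ : QPerm) : Prop :=
  ∃ f : Fin σ.1 → Fin τ.1, IsOcc a σ.2 τ.2 f

/-- Covering relation of the `a`-vincular pattern poset. -/
def VCov (a : ℕ → Bool) (σ τ : QPerm) : Prop :=
  σ.1 + 1 = τ.1 ∧ VOcc a σ τ

/-- The `a`-vincular pattern order: reflexive-transitive closure of covering. -/
def VLe (a : ℕ → Bool) (σ τ : QPerm) : Prop :=
  Relation.ReflTransGen (VCov a) σ τ

/-- Occurrence as an `A`-vincular pattern for a matrix `A` (rows and columns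
1-indexed via `A i j`); a pattern of length `k` uses row `k - 1`. -/
def MOcc (A : ℕ → ℕ → Bool) (σ τ : QPerm) : Prop :=
  VOcc (fun j => A (σ.1 - 1) j) σ τ

/-- Covering relation of the `A`-vincular pattern poset. -/
def MCov (A : ℕ → ℕ → Bool) (σ τ : QPerm) : Prop :=
  σ.1 + 1 = τ.1 ∧ MOcc A σ τ

/-- The `A`-vincular pattern order. -/
def MLe (A : ℕ → ℕ → Bool) (σ τ : QPerm) : Prop :=
  Relation.ReflTransGen (MCov A) σ τ

/-- The quasi-consecutive adjacency vector `a = (1,0,0,…)` (1-indexed). -/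
def qa : ℕ → Bool := fun j => decide (j = 1)

/-- Quasi-consecutive pattern occurrence. -/
def QOcc (σ τ : QPerm) : Prop := VOcc qa σ τ

/-- Covering in the quasi-consecutive pattern poset. -/
def QCov (σ τ : QPerm) : Prop := VCov qa σ τ

/-- The quasi-consecutive pattern poset order. -/
def QLe (σ τ : QPerm) : Prop := VLe qa σ τ

/-- All permutations of length at most `n`, as a finset. -/
def permsUpTo (n : ℕ) : Finset QPerm :=
  (Finset.range (n + 1)).sigma fun _ => Finset.univ

/-- Möbius function of the quasi-consecutive pattern poset, computed with
fuel (the fuel `τ.1` always suffices, since lengths strictly increase along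
the order). -/
noncomputable def qMuAux : ℕ → QPerm → QPerm → ℤ
  | 0, σ, τ => if σ = τ then 1 else 0
  | m + 1, σ, τ =>
      if σ = τ then 1
      else -∑ z ∈ (permsUpTo τ.1).filter fun z => QLe σ z ∧ QLe z τ ∧ z ≠ τ,
            qMuAux m σ z

/-- The Möbius function of the quasi-consecutive pattern poset. -/
noncomputable def qMu (σ τ : QPerm) : ℤ := qMuAux τ.1 σ τ

/-- The interval `[σ, τ]` in the quasi-consecutive pattern poset. -/
def QInterval (σ τ : QPerm) : Set QPerm := {ρ | QLe σ ρ ∧ QLe ρ τ}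

/-- The interval `[σ, τ]` is a chain. -/
def QChain (σ τ : QPerm) : Prop :=
  ∀ ρ₁ ρ₂ : QPerm, ρ₁ ∈ QInterval σ τ → ρ₂ ∈ QInterval σ τ → QLe ρ₁ ρ₂ ∨ QLe ρ₂ ρ₁

/-- The interval `[σ, τ]` is order-isomorphic to the product of a chain with
`p + 1` elements and a chain with `q + 1` elements (componentwise order). -/
def IsGridInterval (σ τ : QPerm) (p q : ℕ) : Prop :=
  ∃ e : QInterval σ τ ≃ Fin (p + 1) × Fin (q + 1),
    ∀ ρ₁ ρ₂ : QInterval σ τ, QLe ρ₁.1 ρ₂.1 ↔ e ρ₁ ≤ e ρ₂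

/-- The occurrence `f` involves position `i` (0-indexed) of the big permutation. -/
def Involves {k n : ℕ} (f : Fin k → Fin n) (i : ℕ) : Prop :=
  ∃ j : Fin k, (f j : ℕ) = i

/-- The occurrence `f` is consecutive: all selected positions are adjacent. -/
def ConsecOcc {k n : ℕ} (f : Fin k → Fin n) : Prop :=
  ∀ (i : ℕ) (h : i + 1 < k),
    (f ⟨i + 1, h⟩ : ℕ) = (f ⟨i, Nat.lt_of_succ_lt h⟩ : ℕ) + 1

/-- The first two entries of `τ` are not consecutive integers. -/
def NotConsecFirstTwo (τ : QPerm) : Prop :=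
  ∀ i j : Fin τ.1, (i : ℕ) = 0 → (j : ℕ) = 1 →
    (τ.2 i : ℕ) + 1 ≠ (τ.2 j : ℕ) ∧ (τ.2 j : ℕ) + 1 ≠ (τ.2 i : ℕ)

/-- `τ` is a monotone (increasing or decreasing) permutation. -/
def IsMonotonePerm (τ : QPerm) : Prop :=
  (∀ i j : Fin τ.1, i < j → τ.2 i < τ.2 j) ∨ (∀ i j : Fin τ.1, i < j → τ.2 j < τ.2 i)

/-!
Write `τ = a₁ ⋯ aₙ`. Occurrences compose, so by uniqueness the occurrence of `σ` in `τ` factors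
through every `ρ` in between; hence an occurrence of such a `ρ` in a pattern `π ≤ τ` covering it
uses the last entry of `π`, and being quasi-consecutive it omits the first or the second entry of
`π`. So `[σ, τ)` is covered by `[σ, τ ∖ a₂]` and `[σ, τ ∖ a₁]`, whose Möbius sums vanish since
`|σ| ≤ n - 2`, and by inclusion–exclusion `μ(σ, τ)` is the Möbius sum over their common lower
bounds above `σ`. If `a₁, a₂` are consecutive integers, `τ ∖ a₂ = τ ∖ a₁` and this sum vanishes
too. Otherwise some later entry lies between `a₁` and `a₂`; iterating the covering argument
shows that the common lower bounds are those of the suffix `a₃ ⋯ aₙ`, so the sum is `1` if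
`σ = a₃ ⋯ aₙ`, i.e. the rank is `2`, and `0` otherwise.
-/

open Equiv Function

section Standardization

variable {m : ℕ} {α : Type*} [LinearOrder α]

def standardize (w : Fin m → α) : Perm (Fin m) := (Tuple.sort w)⁻¹

theorem standardize_lt_standardize_iff {w : Fin m → α} (hw : Injective w) (i j : Fin m) :
    standardize w i < standardize w j ↔ w i < w j := by
  have hmono : StrictMono (w ∘ Tuple.sort w) :=
    (Tuple.monotone_sort w).strictMono_of_injective (hw.comp (Tuple.sort w).injective)
  conv_rhs => rw [← (Tuple.sort w).apply_symm_apply i, ← (Tuple.sort w).apply_symm_apply j]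
  exact hmono.lt_iff_lt.symm

theorem perm_eq_of_lt_iff_lt {p q : Perm (Fin m)} (h : ∀ i j, p i < p j ↔ q i < q j) :
    p = q := by
  have hmono : StrictMono (q ∘ p.symm) := fun a b hab => by
    simpa using (h (p.symm a) (p.symm b)).1 (by simpa using hab)
  ext i
  simpa using congrArg Fin.val (hmono.apply_eq (x := p i)).symm

theorem eq_standardize_of_lt_iff_lt {w : Fin m → α} (hw : Injective w) {p : Perm (Fin m)}
    (hp : ∀ i j, p i < p j ↔ w i < w j) : p = standardize w :=
  perm_eq_of_lt_iff_lt fun i j => (hp i j).trans (standardize_lt_standardize_iff hw i j).symm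

theorem standardize_eq_standardize_iff {v w : Fin m → α} (hv : Injective v) (hw : Injective w) :
    standardize v = standardize w ↔ ∀ i j, v i < v j ↔ w i < w j := by
  refine ⟨fun h i j => ?_, fun h => eq_standardize_of_lt_iff_lt hw fun i j => ?_⟩
  · rw [← standardize_lt_standardize_iff hv, h, standardize_lt_standardize_iff hw]
  · rw [standardize_lt_standardize_iff hv, h]

theorem standardize_perm (p : Perm (Fin m)) : standardize p = p :=
  (eq_standardize_of_lt_iff_lt p.injective fun _ _ => Iff.rfl).symm

end Standardization

section Occurrences

variable {k l n : ℕ}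

theorem qa_eq_false {i : ℕ} (hi : i ≠ 1) : qa i = false := by simp [qa, hi]

theorem IsOcc.comp {sp : Perm (Fin k)} {rp : Perm (Fin l)} {tp : Perm (Fin n)}
    {g : Fin k → Fin l} {h : Fin l → Fin n} (hg : IsOcc qa sp rp g) (hh : IsOcc qa rp tp h) :
    IsOcc qa sp tp (h ∘ g) := by
  refine ⟨hh.1.comp hg.1, fun i j => (hg.2.1 i j).trans (hh.2.1 _ _), fun i hik hi => ?_⟩
  have hi1 : i ≠ 0 := by rintro rfl; simp [qa] at hi
  have hg_adj := hg.2.2 i hik hi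
  -- `g i > g 0`, so the adjacency condition of `h` applies at `g i`
  have hpos : (g ⟨0, by omega⟩ : ℕ) < g ⟨i, Nat.lt_of_succ_lt hik⟩ :=
    hg.1 (Fin.mk_lt_mk.2 (by omega))
  have hlt : (g ⟨i, Nat.lt_of_succ_lt hik⟩ : ℕ) + 1 < l := hg_adj ▸ (g ⟨i + 1, hik⟩).isLt
  have hh_adj := hh.2.2 _ hlt (qa_eq_false (by omega))
  rw [Function.comp_apply, Function.comp_apply, show g ⟨i + 1, hik⟩ = ⟨_, hlt⟩ from Fin.ext hg_adj]
  exact hh_adj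

theorem isOcc_id (sp : Perm (Fin k)) : IsOcc qa sp sp id :=
  ⟨strictMono_id, fun _ _ => Iff.rfl, fun _ _ _ => rfl⟩

theorem eq_standardize_of_isOcc {α : Type*} [LinearOrder α] {w : Fin n → α}
    (hw : Injective w) {a : ℕ → Bool} {rp : Perm (Fin k)} {h : Fin k → Fin n}
    (hh : IsOcc a rp (standardize w) h) : rp = standardize (w ∘ h) :=
  eq_standardize_of_lt_iff_lt (hw.comp hh.1.injective) fun x y =>
    (hh.2.1 x y).trans (standardize_lt_standardize_iff hw _ _)

theorem IsOcc.val_eq_of_last {sp : Perm (Fin k)} {tp : Perm (Fin n)} {f : Fin k → Fin n}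
    (hf : IsOcc qa sp tp f) {x : Fin k} (hx : (f x : ℕ) = n - 1) (i : Fin k) (hi : (i : ℕ) ≠ 0) :
    (f i : ℕ) = n - k + i := by
  suffices key : ∀ d (i : Fin k), (i : ℕ) ≠ 0 → (i : ℕ) + d = k - 1 → (f i : ℕ) + d = n - 1 by
    have := key (k - 1 - i) i hi (by omega)
    have := i.isLt
    have := Fin.le_of_injective f hf.1.injective
    omega
  intro d
  induction d with
  | zero =>
    intro i _ hik
    have hxi : f x ≤ f i := hf.1.monotone (Fin.le_def.2 (by omega))
    have := (f i).isLt
    rw [Fin.le_def] at hxi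
    omega
  | succ d ih =>
    intro i hi hik
    have hnext := ih ⟨i + 1, by omega⟩ (by simp) (by simp only; omega)
    have hadj := hf.2.2 i (by omega) (qa_eq_false (by omega))
    simp only [Fin.eta] at hadj
    omega

theorem IsOcc.val_zero_le_of_last {sp : Perm (Fin k)} {tp : Perm (Fin n)} {f : Fin k → Fin n}
    (hf : IsOcc qa sp tp f) {x : Fin k} (hx : (f x : ℕ) = n - 1) :
    (f ⟨0, x.pos⟩ : ℕ) ≤ n - k := by
  have := x.pos
  by_cases hk : k = 1
  · subst hk
    rw [show (⟨0, x.pos⟩ : Fin 1) = x from Subsingleton.elim _ _, hx]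
  · have h01 : f ⟨0, x.pos⟩ < f ⟨1, by omega⟩ := hf.1 (Fin.mk_lt_mk.2 Nat.one_pos)
    have h1 : (f ⟨1, _⟩ : ℕ) = n - k + 1 := hf.val_eq_of_last hx ⟨1, by omega⟩ one_ne_zero
    rw [Fin.lt_def] at h01
    omega

theorem QLe.trans {a b c : QPerm} (hab : QLe a b) (hbc : QLe b c) : QLe a c :=
  Relation.ReflTransGen.trans hab hbc

theorem QLe.length_le {a b : QPerm} (h : QLe a b) : a.1 ≤ b.1 := by
  induction h with
  | refl => exact le_rfl
  | tail _ hcov ih => exact ih.trans (hcov.1 ▸ Nat.le_succ _)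

theorem QLe.length_lt {a b : QPerm} (h : QLe a b) (hne : a ≠ b) : a.1 < b.1 := by
  obtain rfl | ⟨c, hac, hcb⟩ := Relation.ReflTransGen.cases_tail h
  · exact absurd rfl hne
  · exact hcb.1 ▸ Nat.lt_succ_of_le (QLe.length_le hac)

theorem QLe.eq_of_length_le {a b : QPerm} (h : QLe a b) (hlen : b.1 ≤ a.1) : a = b := by
  by_contra hne
  exact (h.length_lt hne).not_ge hlen

theorem QLe.antisymm {a b : QPerm} (hab : QLe a b) (hba : QLe b a) : a = b :=
  hab.eq_of_length_le hba.length_le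

theorem QLe.exists_isOcc {a b : QPerm} (h : QLe a b) : ∃ f, IsOcc qa a.2 b.2 f := by
  induction h with
  | refl => exact ⟨id, isOcc_id _⟩
  | tail _ hcov ih =>
    obtain ⟨g, hg⟩ := ih
    obtain ⟨h, hh⟩ := hcov.2
    exact ⟨h ∘ g, hg.comp hh⟩

end Occurrences

section DropBut

variable {n : ℕ}

/-- The positions `c, j + 1, …, n - 1` of a word of length `n`; `c` is clamped to `n - 1` to make
the map total. -/
def dropButEmb (n c j : ℕ) : Fin (n - j) → Fin n := fun i =>
  if (i : ℕ) = 0 then ⟨min c (n - 1), by have := i.isLt; omega⟩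
  else ⟨j + i, by have := i.isLt; omega⟩

/-- The pattern of `τ = a₁⋯aₙ` formed by `a_{c+1}` followed by `a_{j+2}⋯aₙ`. Thus
`dropBut τ 0 0 = τ`, the two permutations obtained from `τ` by deleting `a₂`, resp. `a₁`, are
`dropBut τ 0 1` and `dropBut τ 1 1`, and `dropBut τ t t` is the suffix `a_{t+1}⋯aₙ`. -/
def dropBut (tp : Perm (Fin n)) (c j : ℕ) : QPerm :=
  ⟨n - j, standardize (tp ∘ dropButEmb n c j)⟩

variable {c j : ℕ}

theorem dropButEmb_of_eq_zero (hc : c < n) {i : Fin (n - j)} (hi : (i : ℕ) = 0) :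
    (dropButEmb n c j i : ℕ) = c := by
  simp [dropButEmb, hi]
  omega

theorem dropButEmb_of_ne_zero {i : Fin (n - j)} (hi : (i : ℕ) ≠ 0) :
    (dropButEmb n c j i : ℕ) = j + i := by
  simp [dropButEmb, hi]

theorem dropButEmb_strictMono (hc : c ≤ j) : StrictMono (dropButEmb n c j) := by
  intro a b hab
  rw [Fin.lt_def] at hab ⊢
  have := b.isLt
  rw [dropButEmb_of_ne_zero (by omega : (b : ℕ) ≠ 0)]
  by_cases ha : (a : ℕ) = 0
  · rw [dropButEmb_of_eq_zero (by omega) ha]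
    omega
  · rw [dropButEmb_of_ne_zero ha]
    omega

theorem isOcc_dropButEmb {α : Type*} [LinearOrder α] {w : Fin n → α} (hw : Injective w)
    (hc : c ≤ j) :
    IsOcc qa (standardize (w ∘ dropButEmb n c j)) (standardize w) (dropButEmb n c j) := by
  have hinj := (dropButEmb_strictMono (n := n) hc).injective
  refine ⟨dropButEmb_strictMono hc, fun x y => ?_, fun i _ hqa => ?_⟩
  · rw [standardize_lt_standardize_iff (hw.comp hinj), standardize_lt_standardize_iff hw]
    rfl
  · have hi0 : i ≠ 0 := by rintro rfl; simp [qa] at hqa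
    rw [dropButEmb_of_ne_zero (by simp), dropButEmb_of_ne_zero (by simpa using hi0)]
    rfl

theorem dropButEmb_comp_zero_one :
    dropButEmb n c j ∘ dropButEmb (n - j) 0 1 = dropButEmb n c (j + 1) := by
  funext x
  have := x.isLt
  apply Fin.ext
  by_cases hx : (x : ℕ) = 0
  · simp [dropButEmb, hx]
  · have hin : (dropButEmb (n - j) 0 1 x : ℕ) = 1 + x := dropButEmb_of_ne_zero hx
    have hout : (dropButEmb n c (j + 1) x : ℕ) = j + 1 + x := dropButEmb_of_ne_zero hx
    rw [Function.comp_apply, dropButEmb_of_ne_zero (by omega), hin, hout]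
    omega

theorem dropButEmb_comp_one_one :
    dropButEmb n c j ∘ dropButEmb (n - j) 1 1 = dropButEmb n (j + 1) (j + 1) := by
  funext x
  have := x.isLt
  apply Fin.ext
  by_cases hx : (x : ℕ) = 0
  · have hin : (dropButEmb (n - j) 1 1 x : ℕ) = 1 := dropButEmb_of_eq_zero (by omega) hx
    have hout : (dropButEmb n (j + 1) (j + 1) x : ℕ) = j + 1 :=
      dropButEmb_of_eq_zero (by omega) hx
    rw [Function.comp_apply, dropButEmb_of_ne_zero (by omega), hin, hout]
  · have hin : (dropButEmb (n - j) 1 1 x : ℕ) = 1 + x := dropButEmb_of_ne_zero hx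
    have hout : (dropButEmb n (j + 1) (j + 1) x : ℕ) = j + 1 + x := dropButEmb_of_ne_zero hx
    rw [Function.comp_apply, dropButEmb_of_ne_zero (by omega), hin, hout]
    omega

theorem dropBut_zero_zero (tp : Perm (Fin n)) : dropBut tp 0 0 = ⟨n, tp⟩ := by
  have hid : dropButEmb n 0 0 = id := by
    funext x
    apply Fin.ext
    by_cases hx : (x : ℕ) = 0
    · simp [dropButEmb, hx]
    · simp [dropButEmb_of_ne_zero hx]
  simp only [dropBut, hid, Function.comp_id, standardize_perm]
  rfl

end DropBut

section Chains

variable {n : ℕ} (tp : Perm (Fin n)) {c j : ℕ}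

theorem injective_comp_dropButEmb (hc : c ≤ j) : Injective (tp ∘ dropButEmb n c j) :=
  tp.injective.comp (dropButEmb_strictMono hc).injective

theorem dropBut_succ_qCov (hc : c ≤ j) (hjn : j < n) :
    QCov (dropBut tp c (j + 1)) (dropBut tp c j) := by
  refine ⟨by simp only [dropBut]; omega, dropButEmb (n - j) 0 1, ?_⟩
  have h := isOcc_dropButEmb (injective_comp_dropButEmb tp hc) (Nat.zero_le 1)
  rwa [Function.comp_assoc, dropButEmb_comp_zero_one] at h

theorem dropBut_succ_succ_qCov (hc : c ≤ j) (hjn : j < n) :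
    QCov (dropBut tp (j + 1) (j + 1)) (dropBut tp c j) := by
  refine ⟨by simp only [dropBut]; omega, dropButEmb (n - j) 1 1, ?_⟩
  have h := isOcc_dropButEmb (c := 1) (injective_comp_dropButEmb tp hc) le_rfl
  rwa [Function.comp_assoc, dropButEmb_comp_one_one] at h

theorem dropBut_le_of_le {j' : ℕ} (hc : c ≤ j') (hj : j' ≤ j) (hjn : j ≤ n) :
    QLe (dropBut tp c j) (dropBut tp c j') := by
  induction j, hj using Nat.le_induction with
  | base => exact .refl
  | succ j hj ih =>
    exact .head (dropBut_succ_qCov tp (hc.trans hj) (by omega)) (ih (by omega))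

theorem dropBut_self_le_self {t' t : ℕ} (ht : t' ≤ t) (htn : t ≤ n) :
    QLe (dropBut tp t t) (dropBut tp t' t') := by
  induction t, ht using Nat.le_induction with
  | base => exact .refl
  | succ t ht ih => exact .head (dropBut_succ_succ_qCov tp le_rfl (by omega)) (ih (by omega))

theorem eq_dropButEmb_of_isOcc_last {m : ℕ} {rp : Perm (Fin (m - 1))} {π : Perm (Fin m)}
    {h : Fin (m - 1) → Fin m} (hh : IsOcc qa rp π h) {x : Fin (m - 1)}
    (hx : (h x : ℕ) = m - 1) : h = dropButEmb m 0 1 ∨ h = dropButEmb m 1 1 := by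
  have := x.isLt
  have htail (i : Fin (m - 1)) (hi : (i : ℕ) ≠ 0) : (h i : ℕ) = 1 + i := by
    rw [hh.val_eq_of_last hx i hi]
    omega
  have hhead := hh.val_zero_le_of_last hx
  have key : h = dropButEmb m (h ⟨0, x.pos⟩) 1 := by
    funext i
    apply Fin.ext
    by_cases hi : (i : ℕ) = 0
    · rw [dropButEmb_of_eq_zero (h ⟨0, x.pos⟩).isLt hi, show i = ⟨0, x.pos⟩ from Fin.ext hi]
    · rw [dropButEmb_of_ne_zero hi, htail i hi]
  obtain h0 | h0 : (h ⟨0, x.pos⟩ : ℕ) = 0 ∨ (h ⟨0, x.pos⟩ : ℕ) = 1 := by omega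
  · rw [h0] at key
    exact .inl key
  · rw [h0] at key
    exact .inr key

theorem isOcc_dropBut {n : ℕ} (tp : Perm (Fin n)) {c j : ℕ} (hc : c ≤ j) :
    IsOcc qa (dropBut tp c j).2 tp (dropButEmb n c j) := by
  have h := isOcc_dropButEmb tp.injective hc
  rwa [standardize_perm] at h

theorem le_dropBut_or_le_dropBut {k n : ℕ} {sp : Perm (Fin k)} {tp : Perm (Fin n)}
    {f : Fin k → Fin n} (huniq : ∀ g, IsOcc qa sp tp g → g = f) {x : Fin k}
    (hx : (f x : ℕ) = n - 1) {c j : ℕ} (hc : c ≤ j) {z : QPerm} (hσz : QLe ⟨k, sp⟩ z)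
    (hz : QLe z (dropBut tp c j)) (hne : z ≠ dropBut tp c j) :
    QLe z (dropBut tp (j + 1) (j + 1)) ∨ QLe z (dropBut tp c (j + 1)) := by
  obtain rfl | ⟨⟨m, rp⟩, hzρ, hlen, hocc⟩ := Relation.ReflTransGen.cases_tail hz
  · exact absurd rfl hne
  change m + 1 = n - j at hlen
  obtain rfl : m = n - (j + 1) := by omega
  obtain ⟨h, hh⟩ : ∃ h : Fin (n - (j + 1)) → Fin (n - j),
      IsOcc qa rp (standardize (tp ∘ dropButEmb n c j)) h := hocc
  obtain ⟨g, hg⟩ : ∃ g : Fin k → Fin (n - (j + 1)), IsOcc qa sp rp g :=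
    QLe.exists_isOcc (hσz.trans hzρ)
  -- by uniqueness, `σ` sits in `τ` through `ρ`, so `ρ` also contains the last entry
  have hfac : dropButEmb n c j ∘ h ∘ g = f := huniq _ ((hg.comp hh).comp (isOcc_dropBut tp hc))
  have hlast : (h (g x) : ℕ) = n - j - 1 := by
    have hfx : (dropButEmb n c j (h (g x)) : ℕ) = n - 1 := by rw [← hx, ← hfac]; rfl
    have hk : k ≤ n - (j + 1) := QLe.length_le (hσz.trans hzρ)
    have := x.pos
    by_cases h0 : (h (g x) : ℕ) = 0
    · rw [dropButEmb_of_eq_zero (by omega) h0] at hfx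
      omega
    · rw [dropButEmb_of_ne_zero h0] at hfx
      omega
  have hrp := eq_standardize_of_isOcc (injective_comp_dropButEmb tp hc) hh
  rcases eq_dropButEmb_of_isOcc_last hh hlast with rfl | rfl
  · rw [Function.comp_assoc, dropButEmb_comp_zero_one] at hrp
    subst hrp
    exact .inr hzρ
  · rw [Function.comp_assoc, dropButEmb_comp_one_one] at hrp
    subst hrp
    exact .inl hzρ

end Chains

section Comparison

variable {n : ℕ} {tp : Perm (Fin n)}

theorem lt_iff_lt_of_gt_iff_gt {α : Type*} [LinearOrder α] {a b u : α} (ha : u ≠ a) (hb : u ≠ b)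
    (h : a < u ↔ b < u) : u < a ↔ u < b := by
  rw [← not_iff_not, not_lt, not_lt, ha.symm.le_iff_lt, hb.symm.le_iff_lt]
  exact h

theorem dropBut_eq_dropBut_iff {c c' : Fin n} {j : ℕ} (hc : (c : ℕ) ≤ j) (hc' : (c' : ℕ) ≤ j) :
    dropBut tp c j = dropBut tp c' j ↔ ∀ s : Fin n, j < s → (tp c < tp s ↔ tp c' < tp s) := by
  have head (d : Fin n) (x : Fin (n - j)) (hx : (x : ℕ) = 0) : dropButEmb n d j x = d :=
    Fin.ext (dropButEmb_of_eq_zero d.isLt hx)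
  have tail (x : Fin (n - j)) (hx : (x : ℕ) ≠ 0) :
      dropButEmb n c j x = dropButEmb n c' j x ∧ j < (dropButEmb n c j x : ℕ) := by
    rw [Fin.ext_iff, dropButEmb_of_ne_zero hx, dropButEmb_of_ne_zero hx]
    omega
  rw [dropBut, dropBut, Sigma.mk.inj_iff, heq_iff_eq, standardize_eq_standardize_iff
    (injective_comp_dropButEmb tp hc) (injective_comp_dropButEmb tp hc')]
  simp only [true_and, Function.comp_apply]
  constructor
  · intro h s hs
    have hx : ((⟨s - j, by omega⟩ : Fin (n - j)) : ℕ) ≠ 0 := by simp; omega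
    have hs' : dropButEmb n c j ⟨s - j, by omega⟩ = s := by
      rw [Fin.ext_iff, dropButEmb_of_ne_zero hx]
      simp only
      omega
    have := h ⟨0, by omega⟩ ⟨s - j, by omega⟩
    rwa [head c _ rfl, head c' _ rfl, ← (tail _ hx).1, hs'] at this
  · intro h x y
    have hne (d : Fin n) (hd : (d : ℕ) ≤ j) (u : Fin (n - j)) (hu : (u : ℕ) ≠ 0) :
        tp (dropButEmb n c j u) ≠ tp d :=
      fun heq => by have := (tail u hu).2; rw [tp.injective heq] at this; omega
    by_cases hx : (x : ℕ) = 0 <;> by_cases hy : (y : ℕ) = 0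
    · rw [head c x hx, head c y hy, head c' x hx, head c' y hy, lt_self_iff_false,
        lt_self_iff_false]
    · rw [head c x hx, head c' x hx, ← (tail y hy).1]
      exact h _ (tail y hy).2
    · rw [head c y hy, head c' y hy, ← (tail x hx).1]
      exact lt_iff_lt_of_gt_iff_gt (hne c hc x hx) (hne c' hc' x hx) (h _ (tail x hx).2)
    · rw [(tail x hx).1, (tail y hy).1]

end Comparison

section FirstTwo

variable {n : ℕ} {tp : Perm (Fin n)}

theorem notConsecFirstTwo_iff_exists (hn : 2 ≤ n) :
    NotConsecFirstTwo ⟨n, tp⟩ ↔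
      ∃ s : Fin n, 1 < (s : ℕ) ∧ ¬(tp ⟨0, by omega⟩ < tp s ↔ tp ⟨1, hn⟩ < tp s) := by
  have h0n : 0 < n := by omega
  have hval (i : Fin n) (s : ℕ) (hs : s < n) : (tp i : ℕ) = tp ⟨s, hs⟩ ↔ (i : ℕ) = s :=
    ⟨fun h => congrArg Fin.val (tp.injective (Fin.ext h)),
      fun h => by rw [show i = ⟨s, hs⟩ from Fin.ext h]⟩
  have h01 : (tp ⟨0, h0n⟩ : ℕ) ≠ tp ⟨1, hn⟩ := fun h => zero_ne_one ((hval _ 1 hn).1 h)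
  simp only [Fin.lt_def]
  constructor
  · intro hnc
    obtain ⟨hne₁, hne₂⟩ : (tp ⟨0, h0n⟩ : ℕ) + 1 ≠ tp ⟨1, hn⟩ ∧ (tp ⟨1, hn⟩ : ℕ) + 1 ≠ tp ⟨0, h0n⟩ :=
      hnc ⟨0, h0n⟩ ⟨1, hn⟩ rfl rfl
    -- the value just above the smaller of the first two entries lies strictly between them
    have hwn : min (tp ⟨0, h0n⟩ : ℕ) (tp ⟨1, hn⟩) + 1 < n := by
      have := (tp ⟨0, h0n⟩).isLt
      have := (tp ⟨1, hn⟩).isLt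
      omega
    refine ⟨tp.symm ⟨_, hwn⟩, ?_, ?_⟩
    · have h₀ := hval (tp.symm ⟨_, hwn⟩) 0 h0n
      have h₁ := hval (tp.symm ⟨_, hwn⟩) 1 hn
      simp only [Equiv.apply_symm_apply] at h₀ h₁
      omega
    · simp only [Equiv.apply_symm_apply]
      omega
  · rintro ⟨s, hs, hsep⟩ ⟨_, _⟩ ⟨_, _⟩ rfl rfl
    change (tp ⟨0, h0n⟩ : ℕ) + 1 ≠ tp ⟨1, hn⟩ ∧ (tp ⟨1, hn⟩ : ℕ) + 1 ≠ tp ⟨0, h0n⟩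
    have hs₀ := hval s 0 h0n
    have hs₁ := hval s 1 hn
    omega

theorem notConsecFirstTwo_iff_dropBut_ne (hn : 2 ≤ n) :
    NotConsecFirstTwo ⟨n, tp⟩ ↔ dropBut tp 0 1 ≠ dropBut tp 1 1 := by
  rw [notConsecFirstTwo_iff_exists hn, Ne,
    dropBut_eq_dropBut_iff (c := ⟨0, by omega⟩) (c' := ⟨1, hn⟩) (j := 1) (Nat.zero_le 1) le_rfl]
  simp only [not_forall, exists_prop]

end FirstTwo

section Meet

variable {n : ℕ} {tp : Perm (Fin n)}

theorem dropBut_zero_le_two_two {j : ℕ} (hj : 2 ≤ j) (hjn : j < n)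
    (hne : dropBut tp 0 1 ≠ dropBut tp 1 1) (heq : dropBut tp 0 j = dropBut tp 1 j) :
    QLe (dropBut tp 0 j) (dropBut tp 2 2) := by
  have h0n : 0 < n := by omega
  have h1n : 1 < n := by omega
  -- `a_{s+1}` lies strictly between `a₁` and `a₂`
  obtain ⟨s, hs, hsep⟩ :=
    (notConsecFirstTwo_iff_exists h1n).1 ((notConsecFirstTwo_iff_dropBut_ne h1n).2 hne)
  rw [dropBut_eq_dropBut_iff (c := ⟨0, h0n⟩) (c' := ⟨1, h1n⟩) (Nat.zero_le j) (by simp; omega)]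
    at heq
  have hsj : (s : ℕ) ≤ j := by
    by_contra h
    exact hsep (heq s (by omega))
  have hval {a b : Fin n} (h : (a : ℕ) ≠ b) : (tp a : ℕ) ≠ tp b :=
    Fin.val_ne_of_ne (tp.injective.ne (Fin.ne_of_val_ne h))
  -- no later entry separates `a₁` from `a₂`, so `a_{s+1}` may stand in for `a₁`
  have hWs : dropBut tp 0 j = dropBut tp s j := by
    rw [dropBut_eq_dropBut_iff (c := ⟨0, h0n⟩) (c' := s) (Nat.zero_le j) hsj]
    intro t ht
    have hsame := heq t ht
    have := hval (a := t) (b := ⟨0, h0n⟩) (by simp; omega)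
    have := hval (a := t) (b := ⟨1, h1n⟩) (by simp; omega)
    have := hval (a := t) (b := s) (by omega)
    simp only [Fin.lt_def] at hsame hsep ⊢
    omega
  rw [hWs]
  exact (dropBut_le_of_le tp le_rfl hsj hjn.le).trans (dropBut_self_le_self tp hs (by omega))

theorem le_dropBut_two_two {k : ℕ} {sp : Perm (Fin k)} {f : Fin k → Fin n}
    (huniq : ∀ g, IsOcc qa sp tp g → g = f) {x : Fin k} (hx : (f x : ℕ) = n - 1)
    (hne : dropBut tp 0 1 ≠ dropBut tp 1 1) {z : QPerm} (hσz : QLe ⟨k, sp⟩ z) {j : ℕ}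
    (hj : 1 ≤ j) (hz₀ : QLe z (dropBut tp 0 j)) (hz₁ : QLe z (dropBut tp 1 j)) :
    QLe z (dropBut tp 2 2) := by
  have hk : 1 ≤ z.1 := x.pos.trans_le (QLe.length_le hσz)
  obtain ⟨d, hd⟩ : ∃ d, n - j ≤ d := ⟨_, le_rfl⟩
  induction d generalizing j with
  | zero =>
    have : z.1 ≤ n - j := QLe.length_le hz₀
    omega
  | succ d ih =>
    have hzj : z.1 ≤ n - j := QLe.length_le hz₀
    by_cases heq : dropBut tp 0 j = dropBut tp 1 j
    · have hj2 : 2 ≤ j := by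
        by_contra h
        obtain rfl : j = 1 := by omega
        exact hne heq
      exact hz₀.trans (dropBut_zero_le_two_two hj2 (by omega) hne heq)
    have hz₀' : z ≠ dropBut tp 0 j := by
      rintro rfl
      exact heq (QLe.eq_of_length_le hz₁ le_rfl)
    have hz₁' : z ≠ dropBut tp 1 j := by
      rintro rfl
      exact heq (QLe.eq_of_length_le hz₀ le_rfl).symm
    have hsuffix (h : QLe z (dropBut tp (j + 1) (j + 1))) : QLe z (dropBut tp 2 2) := by
      have : z.1 ≤ n - (j + 1) := QLe.length_le h
      exact h.trans (dropBut_self_le_self tp (by omega) (by omega))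
    rcases le_dropBut_or_le_dropBut huniq hx (Nat.zero_le j) hσz hz₀ hz₀' with h | h₀
    · exact hsuffix h
    rcases le_dropBut_or_le_dropBut huniq hx hj hσz hz₁ hz₁' with h | h₁
    · exact hsuffix h
    exact ih (by omega) h₀ h₁ (by omega)

end Meet

section Mobius

variable {σ : QPerm}

theorem mem_permsUpTo {N : ℕ} {z : QPerm} : z ∈ permsUpTo N ↔ z.1 ≤ N := by
  simp [permsUpTo]

theorem qMuAux_self (m : ℕ) (σ : QPerm) : qMuAux m σ σ = 1 := by
  cases m <;> simp [qMuAux]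

theorem qMuAux_succ_of_ne {υ : QPerm} (hne : σ ≠ υ) (m : ℕ) :
    qMuAux (m + 1) σ υ =
      -∑ z ∈ (permsUpTo υ.1).filter (fun z => QLe σ z ∧ QLe z υ ∧ z ≠ υ), qMuAux m σ z := by
  simp [qMuAux, hne]

theorem qMuAux_succ_of_length_le (m : ℕ) {υ : QPerm} (h : υ.1 ≤ m) :
    qMuAux (m + 1) σ υ = qMuAux m σ υ := by
  induction m generalizing υ with
  | zero =>
    by_cases hne : σ = υ
    · rw [hne, qMuAux_self, qMuAux_self]
    rw [qMuAux_succ_of_ne hne, Finset.sum_eq_zero, neg_zero]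
    · simp [qMuAux, hne]
    · intro z hz
      have := QLe.length_lt (Finset.mem_filter.1 hz).2.2.1 (Finset.mem_filter.1 hz).2.2.2
      omega
  | succ m ih =>
    by_cases hne : σ = υ
    · rw [hne, qMuAux_self, qMuAux_self]
    rw [qMuAux_succ_of_ne hne, qMuAux_succ_of_ne hne]
    refine congrArg _ (Finset.sum_congr rfl fun z hz => ih ?_)
    have := QLe.length_lt (Finset.mem_filter.1 hz).2.2.1 (Finset.mem_filter.1 hz).2.2.2
    omega

theorem qMuAux_eq_qMu {m : ℕ} {υ : QPerm} (h : υ.1 ≤ m) : qMuAux m σ υ = qMu σ υ := by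
  induction m, h using Nat.le_induction with
  | base => rfl
  | succ m hm ih => rw [qMuAux_succ_of_length_le m hm, ih]

theorem qMu_of_ne {υ : QPerm} (hne : υ ≠ σ) :
    qMu σ υ = -∑ z ∈ (permsUpTo υ.1).filter (fun z => QLe σ z ∧ QLe z υ ∧ z ≠ υ), qMu σ z := by
  rw [← qMuAux_eq_qMu (Nat.le_succ υ.1), qMuAux_succ_of_ne (Ne.symm hne)]
  refine congrArg _ (Finset.sum_congr rfl fun z hz => qMuAux_eq_qMu ?_)
  exact (Finset.mem_filter.1 hz).2.2.1.length_le

theorem sum_qMu_Icc {υ : QPerm} {N : ℕ} (hN : υ.1 ≤ N) :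
    ∑ z ∈ (permsUpTo N).filter (fun z => QLe σ z ∧ QLe z υ), qMu σ z =
      if υ = σ then 1 else 0 := by
  split_ifs with he
  · subst he
    have hsingle : (permsUpTo N).filter (fun z => QLe υ z ∧ QLe z υ) = {υ} := by
      ext z
      simp only [Finset.mem_filter, Finset.mem_singleton, mem_permsUpTo]
      exact ⟨fun ⟨_, h₁, h₂⟩ => (h₁.antisymm h₂).symm, by rintro rfl; exact ⟨hN, .refl, .refl⟩⟩
    rw [hsingle, Finset.sum_singleton, qMu, qMuAux_self]
  by_cases hle : QLe σ υ
  · have hinsert : (permsUpTo N).filter (fun z => QLe σ z ∧ QLe z υ) =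
        insert υ ((permsUpTo υ.1).filter (fun z => QLe σ z ∧ QLe z υ ∧ z ≠ υ)) := by
      ext z
      simp only [Finset.mem_insert, Finset.mem_filter, mem_permsUpTo]
      constructor
      · rintro ⟨_, h₁, h₂⟩
        by_cases hz : z = υ
        · exact .inl hz
        · exact .inr ⟨h₂.length_le, h₁, h₂, hz⟩
      · rintro (rfl | ⟨_, h₁, h₂, _⟩)
        · exact ⟨hN, hle, .refl⟩
        · exact ⟨h₂.length_le.trans hN, h₁, h₂⟩
    rw [hinsert, Finset.sum_insert (by simp), qMu_of_ne he, neg_add_cancel]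
  · refine Finset.sum_eq_zero fun z hz => absurd ?_ hle
    exact (Finset.mem_filter.1 hz).2.1.trans (Finset.mem_filter.1 hz).2.2

theorem qMu_eq_sum_of_le_or_le {τ a b : QPerm} (hτσ : τ ≠ σ) (haτ : QLe a τ) (hbτ : QLe b τ)
    (ha : a.1 < τ.1) (hb : b.1 < τ.1) (haσ : a ≠ σ) (hbσ : b ≠ σ)
    (hcov : ∀ z, QLe σ z → QLe z τ → z ≠ τ → QLe z a ∨ QLe z b) :
    qMu σ τ = ∑ z ∈ (permsUpTo τ.1).filter (fun z => QLe σ z ∧ QLe z a ∧ QLe z b), qMu σ z := by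
  have hunion : (permsUpTo τ.1).filter (fun z => QLe σ z ∧ QLe z τ ∧ z ≠ τ) =
      (permsUpTo τ.1).filter (fun z => QLe σ z ∧ QLe z a) ∪
        (permsUpTo τ.1).filter (fun z => QLe σ z ∧ QLe z b) := by
    ext z
    simp only [Finset.mem_union, Finset.mem_filter, mem_permsUpTo]
    constructor
    · rintro ⟨hz, hσz, hzτ, hne⟩
      exact (hcov z hσz hzτ hne).imp (fun h => ⟨hz, hσz, h⟩) (fun h => ⟨hz, hσz, h⟩)
    · rintro (⟨hz, hσz, h⟩ | ⟨hz, hσz, h⟩)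
      · exact ⟨hz, hσz, h.trans haτ, fun he => by subst he; have := h.length_le; omega⟩
      · exact ⟨hz, hσz, h.trans hbτ, fun he => by subst he; have := h.length_le; omega⟩
  have hinter : (permsUpTo τ.1).filter (fun z => QLe σ z ∧ QLe z a) ∩
        (permsUpTo τ.1).filter (fun z => QLe σ z ∧ QLe z b) =
      (permsUpTo τ.1).filter (fun z => QLe σ z ∧ QLe z a ∧ QLe z b) := by
    rw [← Finset.filter_and]
    congr 1
    ext z
    tauto
  have hsum := Finset.sum_union_inter (f := qMu σ)
    (s₁ := (permsUpTo τ.1).filter (fun z => QLe σ z ∧ QLe z a))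
    (s₂ := (permsUpTo τ.1).filter (fun z => QLe σ z ∧ QLe z b))
  rw [hinter, sum_qMu_Icc ha.le, sum_qMu_Icc hb.le, if_neg haσ, if_neg hbσ] at hsum
  rw [qMu_of_ne hτσ, hunion]
  linarith

end Mobius

theorem eq_dropBut_of_isOcc_last {k n j : ℕ} (hj : n - j = k) {sp : Perm (Fin k)}
    {tp : Perm (Fin n)} {f : Fin k → Fin n} (hf : IsOcc qa sp tp f) {x : Fin k}
    (hx : (f x : ℕ) = n - 1) : (⟨k, sp⟩ : QPerm) = dropBut tp (f ⟨0, x.pos⟩) j := by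
  subst hj
  have hhead := hf.val_zero_le_of_last hx
  have hf_eq : f = dropButEmb n (f ⟨0, x.pos⟩) j := by
    funext i
    apply Fin.ext
    by_cases hi : (i : ℕ) = 0
    · rw [dropButEmb_of_eq_zero (f _).isLt hi, show i = ⟨0, x.pos⟩ from Fin.ext hi]
    · have := x.pos
      rw [dropButEmb_of_ne_zero hi, hf.val_eq_of_last hx i hi]
      omega
  have hsp := eq_standardize_of_isOcc tp.injective (by rwa [standardize_perm])
  rw [dropBut, ← hf_eq, ← hsp]

theorem qMu_eq_sum_below_coatoms {k n : ℕ} {sp : Perm (Fin k)}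
    {tp : Perm (Fin n)} {f : Fin k → Fin n} (huniq : ∀ g, IsOcc qa sp tp g → g = f) {x : Fin k}
    (hx : (f x : ℕ) = n - 1) (hkn : k + 2 ≤ n) :
    qMu ⟨k, sp⟩ ⟨n, tp⟩ = ∑ z ∈ (permsUpTo n).filter
      (fun z => QLe ⟨k, sp⟩ z ∧ QLe z (dropBut tp 0 1) ∧ QLe z (dropBut tp 1 1)), qMu ⟨k, sp⟩ z := by
  have hσ_ne {a : QPerm} (ha : a.1 = n - 1) : a ≠ ⟨k, sp⟩ := by
    rintro rfl
    simp only at ha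
    omega
  have hτ := dropBut_zero_zero tp
  refine qMu_eq_sum_of_le_or_le (fun h => by simp at h; omega)
    (hτ ▸ dropBut_le_of_le tp le_rfl zero_le_one (by omega))
    (hτ ▸ dropBut_self_le_self tp zero_le_one (by omega)) (by simp [dropBut]; omega)
    (by simp [dropBut]; omega) (hσ_ne rfl) (hσ_ne rfl) fun z hσz hzτ hne => ?_
  rw [← hτ] at hzτ hne
  exact (le_dropBut_or_le_dropBut huniq hx le_rfl hσz hzτ hne).symm

theorem qMu_eq_ite_of_isOcc_unique {k n : ℕ} {sp : Perm (Fin k)} {tp : Perm (Fin n)}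
    {f : Fin k → Fin n} (hf : IsOcc qa sp tp f) (huniq : ∀ g, IsOcc qa sp tp g → g = f)
    {x : Fin k} (hx : (f x : ℕ) = n - 1) (hhead : 2 ≤ (f ⟨0, x.pos⟩ : ℕ)) :
    qMu ⟨k, sp⟩ ⟨n, tp⟩ = if n - k = 2 ∧ dropBut tp 0 1 ≠ dropBut tp 1 1 then 1 else 0 := by
  have hkn : k + 2 ≤ n := by have := hf.val_zero_le_of_last hx; have := x.pos; omega
  rw [qMu_eq_sum_below_coatoms huniq hx hkn]
  by_cases hcons : dropBut tp 0 1 = dropBut tp 1 1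
  · rw [if_neg (fun h => h.2 hcons), ← hcons]
    simp only [and_self]
    rw [sum_qMu_Icc (by simp [dropBut]), if_neg fun h => by
      have := congrArg Sigma.fst h
      simp only [dropBut] at this
      omega]
  have hmeet : (permsUpTo n).filter
        (fun z => QLe ⟨k, sp⟩ z ∧ QLe z (dropBut tp 0 1) ∧ QLe z (dropBut tp 1 1)) =
      (permsUpTo n).filter (fun z => QLe ⟨k, sp⟩ z ∧ QLe z (dropBut tp 2 2)) := by
    refine Finset.filter_congr fun z _ => and_congr_right fun hσz =>
      ⟨fun ⟨h₀, h₁⟩ => le_dropBut_two_two huniq hx hcons hσz le_rfl h₀ h₁, fun h => ⟨?_, ?_⟩⟩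
    · exact h.trans (.single (dropBut_succ_succ_qCov tp zero_le_one (by omega)))
    · exact h.trans (.single (dropBut_succ_succ_qCov tp le_rfl (by omega)))
  rw [hmeet, sum_qMu_Icc (by simp [dropBut])]
  refine if_congr ⟨fun h => ⟨?_, hcons⟩, fun ⟨h, _⟩ => ?_⟩ rfl rfl
  · have := congrArg Sigma.fst h
    simp only [dropBut] at this
    omega
  · have h2 : (f ⟨0, x.pos⟩ : ℕ) = 2 := by have := hf.val_zero_le_of_last hx; omega
    rw [eq_dropBut_of_isOcc_last (j := 2) (by omega) hf hx, h2]

theorem unique_occurrence_last_entry_general (σ τ : QPerm)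
    (f : Fin σ.1 → Fin τ.1) (hf : IsOcc qa σ.2 τ.2 f)
    (huniq : ∀ g : Fin σ.1 → Fin τ.1, IsOcc qa σ.2 τ.2 g → g = f)
    (hn : Involves f (τ.1 - 1)) (h0 : ¬ Involves f 0) (h1 : ¬ Involves f 1) :
    (τ.1 - σ.1 = 2 ∧ NotConsecFirstTwo τ → qMu σ τ = 1) ∧
      (¬ (τ.1 - σ.1 = 2 ∧ NotConsecFirstTwo τ) → qMu σ τ = 0) := by
  obtain ⟨k, sp⟩ := σ
  obtain ⟨n, tp⟩ := τ
  obtain ⟨x, hx⟩ := hn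
  have hhead : 2 ≤ (f ⟨0, x.pos⟩ : ℕ) := by
    have : (f ⟨0, x.pos⟩ : ℕ) ≠ 0 := fun h => h0 ⟨_, h⟩
    have : (f ⟨0, x.pos⟩ : ℕ) ≠ 1 := fun h => h1 ⟨_, h⟩
    omega
  have hn : 2 ≤ n := hhead.trans (f _).isLt.le
  rw [notConsecFirstTwo_iff_dropBut_ne hn, qMu_eq_ite_of_isOcc_unique hf huniq hx hhead]
  exact ⟨fun h => if_pos h, fun h => if_neg h⟩

/-- If `σ` occurs precisely once in `τ = a₁a₂⋯aₙ` and the occurrence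
involves `aₙ` but neither `a₁` nor `a₂`, then `μ(σ,τ) = 0` unless `[σ,τ]`
has rank `2` and `a₁, a₂` are not consecutive integers, in which case
`μ(σ,τ) = 1`. -/
theorem unique_occurrence_last_entry (σ τ : QPerm) (hle : QLe σ τ)
    (f : Fin σ.1 → Fin τ.1) (hf : IsOcc qa σ.2 τ.2 f)
    (huniq : ∀ g : Fin σ.1 → Fin τ.1, IsOcc qa σ.2 τ.2 g → g = f)
    (hn : Involves f (τ.1 - 1)) (h0 : ¬ Involves f 0) (h1 : ¬ Involves f 1) :
    (τ.1 - σ.1 = 2 ∧ NotConsecFirstTwo τ → qMu σ τ = 1) ∧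
      (¬ (τ.1 - σ.1 = 2 ∧ NotConsecFirstTwo τ) → qMu σ τ = 0) :=
  unique_occurrence_last_entry_general σ τ f hf huniq hn h0 h1
end

section
/- Let A be a lower triangular (0,1)-matrix all of whose rows are zero except row 3, which equals (0,1,0). Then 1234 occurs in 342156 as an A-vincular pattern, but 1234 is not below 342156 in the A-vincular pattern poset. -/
open scoped Classical

/-- The matrix whose rows are all zero except row 3, which is `(0,1,0)`. -/
def exA : ℕ → ℕ → Bool := fun i j => decide (i = 3 ∧ j = 2)

/-- The permutation `342156` (0-indexed values `2,3,1,0,4,5`). -/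
def p342156 : Equiv.Perm (Fin 6) :=
  ⟨![2, 3, 1, 0, 4, 5], ![3, 2, 0, 1, 4, 5], by decide, by decide⟩

/-! Any chain from `1234` up to `342156` passes through a permutation `ρ` of length 5. Row 4 of
`A` is zero, so `ρ` occurs consecutively in `342156`, and composing turns an occurrence of `1234`
in `ρ` into an `A`-vincular occurrence of `1234` in `342156` lying inside a window of five
adjacent positions. But the only such occurrence in `342156` uses positions 1, 2, 5, 6. -/

instance {a : ℕ → Bool} {k n : ℕ} {σ : Equiv.Perm (Fin k)} {τ : Equiv.Perm (Fin n)}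
    {f : Fin k → Fin n} : Decidable (IsOcc a σ τ f) :=
  decidable_of_iff
    ((∀ i j : Fin k, i < j → f i < f j) ∧ (∀ i j : Fin k, σ i < σ j ↔ τ (f i) < τ (f j)) ∧
      ∀ (i : Fin k) (h : (i : ℕ) + 1 < k), a (i + 1) = false →
        (f ⟨i + 1, h⟩ : ℕ) = (f ⟨i, Nat.lt_of_succ_lt h⟩ : ℕ) + 1)
    (and_congr_right' <| and_congr_right' ⟨fun h i hi => h ⟨i, Nat.lt_of_succ_lt hi⟩ hi,
      fun h i hi => h i hi⟩)

theorem ConsecOcc.val_add {m n : ℕ} {f : Fin m → Fin n} (hf : ConsecOcc f) (i : Fin m) :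
    ∀ (d : ℕ) (h : (i : ℕ) + d < m), (f ⟨i + d, h⟩ : ℕ) = f i + d
  | 0, _ => rfl
  | d + 1, h => by
    have step := hf (i + d) h
    rwa [val_add hf i d] at step

theorem ConsecOcc.val_eq_add_sub {m n : ℕ} {f : Fin m → Fin n} (hf : ConsecOcc f)
    {i j : Fin m} (hij : i ≤ j) : (f j : ℕ) = f i + (j - i) := by
  rw [← hf.val_add i (j - i) (by omega)]
  congr
  ext
  simp only
  omega

theorem IsOcc.consecOcc_of_forall_eq_false {a : ℕ → Bool} {k n : ℕ} {σ : Equiv.Perm (Fin k)}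
    {τ : Equiv.Perm (Fin n)} {f : Fin k → Fin n} (hf : IsOcc a σ τ f) (ha : ∀ j, a j = false) :
    ConsecOcc f :=
  fun i h => hf.2.2 i h (ha (i + 1))

theorem IsOcc.comp_of_consecOcc {a b : ℕ → Bool} {k m n : ℕ} {σ : Equiv.Perm (Fin k)}
    {π : Equiv.Perm (Fin m)} {τ : Equiv.Perm (Fin n)} {g : Fin k → Fin m} {f : Fin m → Fin n}
    (hg : IsOcc a σ π g) (hf : IsOcc b π τ f) (hfc : ConsecOcc f) : IsOcc a σ τ (f ∘ g) := by
  refine ⟨hf.1.comp hg.1, fun i j => (hg.2.1 i j).trans (hf.2.1 (g i) (g j)), fun i h ha => ?_⟩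
  have hadj := hg.2.2 i h ha
  have hgi : g ⟨i + 1, h⟩ = ⟨g ⟨i, Nat.lt_of_succ_lt h⟩ + 1, hadj ▸ (g _).isLt⟩ := Fin.ext hadj
  simp only [Function.comp_apply, hgi]
  exact hfc _ _

namespace MLe

variable {A : ℕ → ℕ → Bool} {σ τ : QPerm}

theorem length_le (h : MLe A σ τ) : σ.1 ≤ τ.1 := by
  induction h with
  | refl => exact le_rfl
  | tail _ hcov _ => have := hcov.1; omega

theorem eq_of_length_le (h : MLe A σ τ) (hlen : τ.1 ≤ σ.1) : σ = τ := by
  rcases Relation.ReflTransGen.cases_head h with rfl | ⟨ρ, hσρ, hρτ⟩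
  · rfl
  · have := hσρ.1; have := length_le hρτ; omega

theorem mcov_of_length_eq_succ (h : MLe A σ τ) (hlen : τ.1 = σ.1 + 1) : MCov A σ τ := by
  rcases Relation.ReflTransGen.cases_head h with rfl | ⟨ρ, hσρ, hρτ⟩
  · omega
  · rwa [← eq_of_length_le hρτ (by have := hσρ.1; omega)]

theorem exists_mcov_mcov_of_length_eq_add_two (h : MLe A σ τ) (hlen : τ.1 = σ.1 + 2) :
    ∃ ρ, MCov A σ ρ ∧ MCov A ρ τ := by
  rcases Relation.ReflTransGen.cases_head h with rfl | ⟨ρ, hσρ, hρτ⟩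
  · omega
  · exact ⟨ρ, hσρ, mcov_of_length_eq_succ hρτ (by have := hσρ.1; omega)⟩

end MLe

set_option maxRecDepth 100000 in
theorem eq_of_isOcc_exA_refl_p342156 {h : Fin 4 → Fin 6}
    (hh : IsOcc (exA 3) (Equiv.refl (Fin 4)) p342156 h) : h = ![0, 1, 4, 5] := by
  revert h
  decide

/-- `1234` occurs in `342156` as an `exA`-vincular pattern, but is not below
it in the `exA`-vincular pattern poset. -/
theorem occurs_but_not_le :
    MOcc exA ⟨4, Equiv.refl (Fin 4)⟩ ⟨6, p342156⟩ ∧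
      ¬ MLe exA ⟨4, Equiv.refl (Fin 4)⟩ ⟨6, p342156⟩ := by
  refine ⟨⟨![0, 1, 4, 5], by decide⟩, fun hle => ?_⟩
  obtain ⟨ρ, ⟨hρ, g, hg⟩, -, f, hf⟩ := hle.exists_mcov_mcov_of_length_eq_add_two rfl
  have hρ5 : ρ.1 = 5 := hρ.symm
  have hfc : ConsecOcc f := hf.consecOcc_of_forall_eq_false fun j => by simp [exA, hρ5]
  have hfg := eq_of_isOcc_exA_refl_p342156 (hg.comp_of_consecOcc hf hfc)
  have h0 : (f (g 0) : ℕ) = 0 := congrArg (fun h => (h 0 : ℕ)) hfg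
  have h3 : (f (g 3) : ℕ) = 5 := congrArg (fun h => (h 3 : ℕ)) hfg
  have hspan := hfc.val_eq_add_sub (hg.1.monotone (show (0 : Fin 4) ≤ 3 by decide))
  have := (g 3).isLt
  omega
end

section
/- Let a = (0,1,0,0,...), the vector whose only nonzero component is the second. Then 123 ≤_a 51423 in the a-vincular pattern poset (via the chain 123 ≺ 4123 ≺ 51423), but 123 does not occur in 51423 as an a-vincular pattern. -/
open scoped Classical

/-- The vector `a = (0,1,0,0,…)` whose only nonzero component is the second. -/
def exa : ℕ → Bool := fun j => decide (j = 2)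

/-- The permutation `51423` (0-indexed values `4,0,3,1,2`). -/
def p51423 : Equiv.Perm (Fin 5) :=
  ⟨![4, 0, 3, 1, 2], ![1, 3, 4, 2, 0], by decide, by decide⟩

def p4123 : Equiv.Perm (Fin 4) :=
  ⟨![3, 0, 1, 2], ![1, 2, 3, 0], by decide, by decide⟩

-- All quantifiers range over finite types, so concrete occurrences can be checked by `decide`.
theorem isOcc_iff_forall_fin (a : ℕ → Bool) {k n : ℕ} (σ : Equiv.Perm (Fin k))
    (τ : Equiv.Perm (Fin n)) (f : Fin k → Fin n) :
    IsOcc a σ τ f ↔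
      (∀ i j : Fin k, i < j → f i < f j) ∧ (∀ i j : Fin k, σ i < σ j ↔ τ (f i) < τ (f j)) ∧
        ∀ i j : Fin k, (j : ℕ) = i + 1 → a j = false → (f j : ℕ) = f i + 1 := by
  refine and_congr Iff.rfl (and_congr Iff.rfl ⟨fun hadj i j hij ha => ?_, fun hadj i h ha => ?_⟩)
  · obtain ⟨j, hj⟩ := j
    subst hij
    exact hadj i hj ha
  · exact hadj ⟨i, Nat.lt_of_succ_lt h⟩ ⟨i + 1, h⟩ rfl ha

theorem vCov_123_4123 : VCov exa ⟨3, Equiv.refl (Fin 3)⟩ ⟨4, p4123⟩ :=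
  ⟨rfl, ![1, 2, 3], (isOcc_iff_forall_fin _ _ _ _).2 (by decide)⟩

theorem vCov_4123_51423 : VCov exa ⟨4, p4123⟩ ⟨5, p51423⟩ :=
  ⟨rfl, ![0, 1, 3, 4], (isOcc_iff_forall_fin _ _ _ _).2 (by decide)⟩

theorem exists_adjacent_ascent_of_vOcc_123 {a : ℕ → Bool} (ha : a 1 = false) {n : ℕ}
    {τ : Equiv.Perm (Fin n)} (h : VOcc a ⟨3, Equiv.refl (Fin 3)⟩ ⟨n, τ⟩) :
    ∃ x y z : Fin n, (x : ℕ) + 1 = y ∧ y < z ∧ τ x < τ y ∧ τ y < τ z := by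
  obtain ⟨f, hmono, hord, hadj⟩ := h
  exact ⟨f 0, f 1, f 2, (hadj 0 (by norm_num) ha).symm, hmono (by decide),
    (hord 0 1).1 (by decide), (hord 1 2).1 (by decide)⟩

/-- `123 ≤ₐ 51423` in the `a`-vincular pattern poset for `a = (0,1,0,…)`,
but `123` does not occur in `51423` as an `a`-vincular pattern. -/
theorem le_but_not_occurs :
    VLe exa ⟨3, Equiv.refl (Fin 3)⟩ ⟨5, p51423⟩ ∧
      ¬ VOcc exa ⟨3, Equiv.refl (Fin 3)⟩ ⟨5, p51423⟩ := by
  refine ⟨.tail (.single vCov_123_4123) vCov_4123_51423, fun h => ?_⟩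
  obtain ⟨x, y, z, hxy, hyz, hτxy, hτyz⟩ := exists_adjacent_ascent_of_vOcc_123 rfl h
  -- the only adjacent ascents of 51423 are 14 and 23, and nothing to their right exceeds 4 or 3
  revert x y z
  decide
end
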